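/- For all positive integers n and w, the number of flat LEGO pyramids built from n tiles of width w equals the binomial coefficient C(wn-1, n-1); equivalently, defining ρ_n(w) = C(wn-1, n-1), one has ρ_n(w) = (n^{n-1}/(n-1)!) · ∏_{i=1}^{n-1} (w - i/n) as real numbers. -/

import Mathlib

theorem pyramid_count_formula (n w : ℕ) (hn : 0 < n) (hw : 0 < w) :
    ((Nat.choose (w * n - 1) (n - 1) : ℝ)) =
      (n : ℝ) ^ (n - 1) / (Nat.factorial (n - 1)) *
        ∏ i ∈ Finset.Icc 1 (n - 1), ((w : ℝ) - (i : ℝ) / (n : ℝ)) := by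
  have hn' : (n : ℝ) ≠ 0 := Nat.cast_ne_zero.mpr hn.ne'
  have hle : n ≤ w * n := Nat.le_mul_of_pos_left n hw
  -- rewrite each factor
  have h1 : ∀ i ∈ Finset.Icc 1 (n - 1),
      (w : ℝ) - (i : ℝ) / (n : ℝ) = ((w * n - i : ℕ) : ℝ) / n := by
    intro i hi
    simp only [Finset.mem_Icc] at hi
    have hin : i ≤ w * n := le_trans (hi.2.trans (Nat.sub_le n 1)) hle
    rw [Nat.cast_sub hin]
    push_cast
    field_simp
  rw [Finset.prod_congr rfl h1, Finset.prod_div_distrib, Finset.prod_const,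
    Nat.card_Icc]
  have hcard : n - 1 + 1 - 1 = n - 1 := by omega
  rw [hcard]
  have hprod : (∏ i ∈ Finset.Icc 1 (n - 1), ((w * n - i : ℕ) : ℝ))
      = ((w * n - 1).descFactorial (n - 1) : ℝ) := by
    rw [Nat.descFactorial_eq_prod_range]
    push_cast
    rw [show Finset.Icc 1 (n - 1) = Finset.Ico 1 (n - 1 + 1) by rw [Finset.Ico_add_one_right_eq_Icc],
      Finset.prod_Ico_eq_prod_range]
    apply Finset.prod_congr
    · rfl
    · intro i hi
      simp only [Finset.mem_range] at hi
      congr 1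
      omega
  rw [hprod, Nat.descFactorial_eq_factorial_mul_choose]
  have hfac : (Nat.factorial (n - 1) : ℝ) ≠ 0 := Nat.cast_ne_zero.mpr (Nat.factorial_ne_zero _)
  have hpow : ((n : ℝ)) ^ (n - 1) ≠ 0 := pow_ne_zero _ hn'
  push_cast
  field_simp
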